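/- Let p be an odd prime, m a positive integer, and n = 2m - 1. For the power mapping F(x) = x^{p^m+2} over F_{p^n}: if 1/4 is a (p-1)-th power in F_{p^n} and 1 + 2^n ≡ 0 (mod p), then ω_p = 1 and ω_1 = 0; otherwise, ω_p = 0 and ω_1 = 1. -/

import Mathlib

open Finset

/-- The number of `x` in the field `F` with `(x+1)^d - x^d = b`. -/
def deltaF (F : Type*) [Field F] [Fintype F] [DecidableEq F] (d : ℕ) (b : F) : ℕ :=
  (Finset.univ.filter (fun x : F => (x + 1) ^ d - x ^ d = b)).card

/-- The number of `b` in the field `F` with `deltaF F d b = i`. -/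
def omegaF (F : Type*) [Field F] [Fintype F] [DecidableEq F] (d i : ℕ) : ℕ :=
  (Finset.univ.filter (fun b : F => deltaF F d b = i)).card

/-- A fixed-point-free involution on a finset forces even cardinality. -/
lemma stmt19_even_card_of_invol {α : Type*} [DecidableEq α] (f : α → α) :
    ∀ s : Finset α, (∀ a ∈ s, f a ∈ s) → (∀ a ∈ s, f (f a) = a) → (∀ a ∈ s, f a ≠ a) →
    Even s.card := by
  intro s
  induction s using Finset.strongInduction with
  | _ s ih =>
    intro hmem hinv hne
    rcases s.eq_empty_or_nonempty with rfl | ⟨a, ha⟩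
    · simp
    · have hfa : f a ∈ s := hmem a ha
      have hane : f a ≠ a := hne a ha
      have hsub : ({a, f a} : Finset α) ⊆ s := by
        intro x hx
        rcases Finset.mem_insert.1 hx with rfl | hx
        · exact ha
        · rw [Finset.mem_singleton] at hx; exact hx ▸ hfa
      have hcard2 : ({a, f a} : Finset α).card = 2 := by
        rw [Finset.card_insert_of_notMem (by simp [Ne.symm hane]), Finset.card_singleton]
      have hss : s \ {a, f a} ⊂ s := Finset.sdiff_ssubset hsub ⟨a, by simp⟩
      have hmem' : ∀ x ∈ s \ {a, f a}, f x ∈ s \ {a, f a} := by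
        intro x hx
        rw [Finset.mem_sdiff] at hx ⊢
        obtain ⟨hxs, hxn⟩ := hx
        simp only [Finset.mem_insert, Finset.mem_singleton] at hxn
        push_neg at hxn
        refine ⟨hmem x hxs, ?_⟩
        simp only [Finset.mem_insert, Finset.mem_singleton]
        push_neg
        constructor
        · intro h; exact hxn.2 (by rw [← hinv x hxs, h])
        · intro h
          have := congrArg f h
          rw [hinv x hxs, hinv a ha] at this
          exact hxn.1 this
      have hev := ih _ hss hmem' (fun x hx => hinv x (Finset.mem_sdiff.1 hx).1)
        (fun x hx => hne x (Finset.mem_sdiff.1 hx).1)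
      have hle : 2 ≤ s.card := hcard2 ▸ Finset.card_le_card hsub
      have hcards : s.card = (s \ {a, f a}).card + 2 := by
        rw [Finset.card_sdiff_of_subset hsub, hcard2]; omega
      rw [hcards]
      obtain ⟨c, hc⟩ := hev
      exact ⟨c + 1, by omega⟩

/-- `(p-1) * ∑_{i<k} p^i = p^k - 1`. -/
lemma stmt19_geom (p : ℕ) (hp : 1 ≤ p) (k : ℕ) :
    (p - 1) * (∑ i ∈ Finset.range k, p ^ i) = p ^ k - 1 := by
  have h := geom_sum_mul (p : ℤ) k
  have h1 : (1 : ℕ) ≤ p ^ k := Nat.one_le_pow _ _ hp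
  zify [hp, h1]
  push_cast at h ⊢
  linarith

/-- geometric sum mod r, when `p ≡ 1 [MOD r]`. -/
lemma stmt19_modeq (p r k : ℕ) (h : p ≡ 1 [MOD r]) :
    (∑ i ∈ Finset.range k, p ^ i) ≡ k [MOD r] := by
  induction k with
  | zero => rfl
  | succ k ih =>
    rw [Finset.sum_range_succ]
    have := (h.pow k)
    simpa using ih.add (by simpa using h.pow k)

lemma stmt19_gcd (p : ℕ) (hp : 2 ≤ p) (m : ℕ) (hm : 1 ≤ m) :
    Nat.gcd (p ^ m - 1) (p ^ (2 * m - 1) - 1) = p - 1 := by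
  set d := Nat.gcd (p ^ m - 1) (p ^ (2 * m - 1) - 1) with hd
  have hA1 : 1 ≤ p ^ (m - 1) := Nat.one_le_pow _ _ (by omega)
  have hB1 : 1 ≤ p ^ m := Nat.one_le_pow _ _ (by omega)
  have hBA : p ^ m = p * p ^ (m - 1) := by
    rw [← pow_succ']
    congr 1; omega
  have hC : p ^ (2 * m - 1) = p ^ (m - 1) * p ^ m := by
    rw [← pow_add]; congr 1; omega
  have h1 : d ∣ p ^ m - 1 := Nat.gcd_dvd_left _ _
  have h2 : d ∣ p ^ (2 * m - 1) - 1 := Nat.gcd_dvd_right _ _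
  -- d ∣ p^(m-1) - 1
  have key1 : p ^ (m - 1) - 1 = (p ^ (2 * m - 1) - 1) - p ^ (m - 1) * (p ^ m - 1) := by
    have e1 : p ^ (m - 1) * (p ^ m - 1) + p ^ (m - 1) = p ^ (m - 1) * p ^ m := by
      rw [← Nat.mul_succ]; congr 1; omega
    have e2 : p ^ (m - 1) * p ^ m = p ^ (2 * m - 1) := hC.symm
    omega
  have h3 : d ∣ p ^ (m - 1) - 1 := by
    rw [key1]; exact Nat.dvd_sub h2 (Dvd.dvd.mul_left h1 _)
  -- d ∣ p - 1
  have key2 : p - 1 = (p ^ m - 1) - p * (p ^ (m - 1) - 1) := by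
    have e1 : p * (p ^ (m - 1) - 1) + p = p * p ^ (m - 1) := by
      rw [← Nat.mul_succ]; congr 1; omega
    have e2 : p * p ^ (m - 1) = p ^ m := hBA.symm
    omega
  have h4 : d ∣ p - 1 := by
    rw [key2]; exact Nat.dvd_sub h1 (Dvd.dvd.mul_left h3 _)
  -- p - 1 ∣ d
  have h5 : p - 1 ∣ p ^ m - 1 := by simpa using Nat.sub_dvd_pow_sub_pow p 1 m
  have h6 : p - 1 ∣ p ^ (2 * m - 1) - 1 := by simpa using Nat.sub_dvd_pow_sub_pow p 1 (2 * m - 1)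
  exact Nat.dvd_antisymm h4 (Nat.dvd_gcd h5 h6)

/-- powers agree along a `ModEq` once some power is 1. -/
lemma stmt19_pow_modeq {F : Type*} [Monoid F] {z : F} {r a b : ℕ}
    (hz : z ^ r = 1) (h : a ≡ b [MOD r]) : z ^ a = z ^ b := by
  have key : ∀ c : ℕ, z ^ c = z ^ (c % r) := by
    intro c
    conv_lhs => rw [← Nat.div_add_mod c r]
    rw [pow_add, pow_mul, hz, one_pow, one_mul]
  rw [key a, key b, h]

lemma stmt19_charP {p n : ℕ} (hp : p.Prime) (hn : 1 ≤ n) (F : Type*) [Field F] [Fintype F]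
    (hF : Fintype.card F = p ^ n) : CharP F p := by
  set r := ringChar F with hr
  haveI : CharP F r := ringChar.charP F
  have hrp : r.Prime := CharP.char_is_prime F r
  have hdvd : r ∣ p ^ n := by
    have h0 : ((Fintype.card F : ℕ) : F) = 0 := FiniteField.cast_card_eq_zero F
    rw [hF] at h0
    exact (CharP.cast_eq_zero_iff F r (p ^ n)).1 h0
  have hrpe : r = p := (Nat.prime_dvd_prime_iff_eq hrp hp).1 (hrp.dvd_of_dvd_pow hdvd)
  rw [← hrpe]
  exact ringChar.charP F

lemma stmt19_keyid {p m : ℕ} (hp : p.Prime) (F : Type*) [Field F] [CharP F p] (x : F) :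
    4 * ((x + 1) ^ (p ^ m + 2) - x ^ (p ^ m + 2)) - 1
      = (2 * x + 1) ^ 2 * (2 * (2 * x + 1) ^ (p ^ m - 1) + 1) := by
  haveI : Fact p.Prime := ⟨hp⟩
  have h2q : (2 : F) ^ p ^ m = 2 := by
    have := add_pow_char_pow (R := F) 1 1 p m
    norm_num at this
    simpa using this
  have h1 : (x + 1) ^ p ^ m = x ^ p ^ m + 1 := by
    simpa using add_pow_char_pow (R := F) x 1 p m
  have hv : 2 * x ^ p ^ m + 1 = (2 * x + 1) ^ (p ^ m - 1) * (2 * x + 1) := by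
    have h2 : (2 * x + 1) ^ p ^ m = 2 * x ^ p ^ m + 1 := by
      have h3 := add_pow_char_pow (R := F) (2 * x) 1 p m
      rw [mul_pow, h2q, one_pow] at h3
      simpa using h3
    rw [← h2, ← pow_succ]
    congr 1
    have : 1 ≤ p ^ m := Nat.one_le_pow _ _ hp.pos
    omega
  rw [pow_add, pow_add]
  linear_combination (4 * (x + 1) ^ 2) * h1 + (2 * (2 * x + 1)) * hv

lemma stmt19_sol {p m : ℕ} (hp : p.Prime) (F : Type*) [Field F] [CharP F p]
    (h2 : (2 : F) ≠ 0) (h4 : (4 : F) ≠ 0) (x : F) :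
    (x + 1) ^ (p ^ m + 2) - x ^ (p ^ m + 2) = (4 : F)⁻¹ ↔
      (2 * x + 1 = 0 ∨ (2 * x + 1) ^ (p ^ m - 1) = -(2 : F)⁻¹) := by
  have hk := stmt19_keyid hp F x (m := m)
  constructor
  · intro h
    rw [h, mul_inv_cancel₀ h4] at hk
    have h0 : (2 * x + 1) ^ 2 * (2 * (2 * x + 1) ^ (p ^ m - 1) + 1) = 0 := by
      linear_combination -hk
    rcases mul_eq_zero.1 h0 with h' | h'
    · exact Or.inl ((pow_eq_zero_iff (two_ne_zero)).1 h')
    · right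
      field_simp
      linear_combination h'
  · intro h
    have h0 : (2 * x + 1) ^ 2 * (2 * (2 * x + 1) ^ (p ^ m - 1) + 1) = 0 := by
      rcases h with h' | h'
      · rw [h']; ring
      · rw [h']; field_simp; ring
    rw [h0] at hk
    have : (4 : F) * ((x + 1) ^ (p ^ m + 2) - x ^ (p ^ m + 2)) = 1 := by
      linear_combination hk
    field_simp
    linear_combination this

lemma stmt19_kernel {p m n : ℕ} (hp : p.Prime) (hm : 1 ≤ m) (hn : n = 2 * m - 1)
    (F : Type*) [Field F] [Fintype F] [DecidableEq F] [CharP F p]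
    (hF : Fintype.card F = p ^ n) (z : F) :
    z ^ (p ^ m - 1) = 1 ↔ z ≠ 0 ∧ z ^ p = z := by
  haveI : Fact p.Prime := ⟨hp⟩
  have hq1 : 2 ≤ p ^ m := by
    calc 2 ≤ p := hp.two_le
    _ = p ^ 1 := (pow_one p).symm
    _ ≤ p ^ m := Nat.pow_le_pow_right hp.pos hm
  constructor
  · intro h1
    have hz : z ≠ 0 := by
      rintro rfl
      rw [zero_pow (by omega)] at h1
      exact zero_ne_one h1
    have h2 : z ^ (p ^ n - 1) = 1 := by
      have := FiniteField.pow_card_sub_one_eq_one z hz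
      rwa [hF] at this
    have hg := pow_gcd_eq_one.2 ⟨h1, h2⟩
    rw [hn, stmt19_gcd p hp.two_le m hm] at hg
    refine ⟨hz, ?_⟩
    have hpp : p - 1 + 1 = p := by have := hp.two_le; omega
    conv_lhs => rw [← hpp]
    rw [pow_succ, hg, one_mul]
  · rintro ⟨hz, hzp⟩
    have hpp : p - 1 + 1 = p := by have := hp.two_le; omega
    have hz1 : z ^ (p - 1) = 1 := by
      apply mul_right_cancel₀ hz
      rw [one_mul, ← pow_succ, hpp, hzp]
    obtain ⟨k, hk⟩ : p - 1 ∣ p ^ m - 1 := by simpa using Nat.sub_dvd_pow_sub_pow p 1 m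
    rw [hk, pow_mul, hz1, one_pow]

lemma stmt19_Kcard {p m n : ℕ} (hp : p.Prime) (hm : 1 ≤ m) (hn : n = 2 * m - 1)
    (F : Type*) [Field F] [Fintype F] [DecidableEq F] [CharP F p]
    (hF : Fintype.card F = p ^ n) :
    (Finset.univ.filter (fun z : F => z ^ (p ^ m - 1) = 1)).card = p - 1 := by
  haveI : Fact p.Prime := ⟨hp⟩
  set φ := ZMod.castHom (dvd_refl p) F with hφ
  have hinj : Function.Injective φ := φ.injective
  set R := Finset.univ.filter (fun z : F => z ^ p = z) with hR
  have him : Finset.image φ Finset.univ ⊆ R := by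
    intro z hz
    simp only [Finset.mem_image] at hz
    obtain ⟨w, _, rfl⟩ := hz
    simp only [hR, Finset.mem_filter, Finset.mem_univ, true_and]
    rw [← map_pow, ZMod.pow_card]
  have hfne : (Polynomial.X ^ p - Polynomial.X : Polynomial F) ≠ 0 := by
    intro h
    have := congrArg (fun f => Polynomial.coeff f p) h
    simp only [Polynomial.coeff_sub, Polynomial.coeff_X_pow, if_pos rfl,
      Polynomial.coeff_X, Polynomial.coeff_zero] at this
    rw [if_neg (by have := hp.two_le; omega : ¬ (1 : ℕ) = p)] at this
    norm_num at this
  have hRsub : R ⊆ (Polynomial.X ^ p - Polynomial.X : Polynomial F).roots.toFinset := by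
    intro z hz
    simp only [hR, Finset.mem_filter, Finset.mem_univ, true_and] at hz
    rw [Multiset.mem_toFinset, Polynomial.mem_roots hfne]
    simp [Polynomial.IsRoot, hz, sub_eq_zero]
  have hdeg : (Polynomial.X ^ p - Polynomial.X : Polynomial F).natDegree ≤ p := by
    refine le_trans (Polynomial.natDegree_sub_le _ _) ?_
    simp [Polynomial.natDegree_X_pow, Polynomial.natDegree_X, hp.one_lt.le]
  have hRcard : R.card ≤ p := by
    calc R.card ≤ _ := Finset.card_le_card hRsub
    _ ≤ Multiset.card (Polynomial.X ^ p - Polynomial.X : Polynomial F).roots :=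
        Multiset.toFinset_card_le _
    _ ≤ _ := (Polynomial.card_roots' _)
    _ ≤ p := hdeg
  have hImcard : (Finset.image φ Finset.univ).card = p := by
    rw [Finset.card_image_of_injective _ hinj, Finset.card_univ, ZMod.card]
  have hReq : Finset.image φ Finset.univ = R :=
    Finset.eq_of_subset_of_card_le him (by rw [hImcard]; exact hRcard)
  have hRc : R.card = p := by rw [← hReq, hImcard]
  have h0R : (0 : F) ∈ R := by
    simp only [hR, Finset.mem_filter, Finset.mem_univ, true_and]
    exact zero_pow hp.pos.ne'
  have hKR : Finset.univ.filter (fun z : F => z ^ (p ^ m - 1) = 1) = R.erase 0 := by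
    ext z
    simp only [Finset.mem_filter, Finset.mem_univ, true_and, Finset.mem_erase, hR]
    rw [stmt19_kernel hp hm hn F hF z]
  rw [hKR, Finset.card_erase_of_mem h0R, hRc]

lemma stmt19_Scard {p m n : ℕ} (hp : p.Prime) (hm : 1 ≤ m) (hn : n = 2 * m - 1)
    (F : Type*) [Field F] [Fintype F] [DecidableEq F] [CharP F p]
    (hF : Fintype.card F = p ^ n) (c : F) (hc : c ≠ 0) :
    (Finset.univ.filter (fun u : F => u ^ (p ^ m - 1) = c)).card
      = if ∃ y : F, y ^ (p ^ m - 1) = c then p - 1 else 0 := by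
  have hq2 : 2 ≤ p ^ m := by
    calc 2 ≤ p := hp.two_le
    _ = p ^ 1 := (pow_one p).symm
    _ ≤ p ^ m := Nat.pow_le_pow_right hp.pos hm
  by_cases hex : ∃ y : F, y ^ (p ^ m - 1) = c
  · rw [if_pos hex]
    obtain ⟨y₀, hy₀⟩ := hex
    have hy0 : y₀ ≠ 0 := by
      rintro rfl
      rw [zero_pow (by omega)] at hy₀
      exact hc hy₀.symm
    have hbij : (Finset.univ.filter (fun u : F => u ^ (p ^ m - 1) = c)).card
        = (Finset.univ.filter (fun z : F => z ^ (p ^ m - 1) = 1)).card := by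
      apply Finset.card_nbij' (i := fun u => u * y₀⁻¹) (j := fun z => z * y₀)
      · intro u hu
        simp only [Finset.mem_coe, Finset.mem_filter, Finset.mem_univ, true_and] at hu ⊢
        rw [mul_pow, hu, inv_pow, hy₀, mul_inv_cancel₀ hc]
      · intro z hz
        simp only [Finset.mem_coe, Finset.mem_filter, Finset.mem_univ, true_and] at hz ⊢
        rw [mul_pow, hz, one_mul, hy₀]
      · intro u _
        field_simp
      · intro z _
        field_simp
    rw [hbij, stmt19_Kcard hp hm hn F hF]
  · rw [if_neg hex, Finset.card_eq_zero, Finset.filter_eq_empty_iff]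
    intro u _
    exact fun h => hex ⟨u, h⟩

lemma stmt19_delta {p m : ℕ} (hp : p.Prime) (hm : 1 ≤ m)
    (F : Type*) [Field F] [Fintype F] [DecidableEq F] [CharP F p]
    (h2 : (2 : F) ≠ 0) (h4 : (4 : F) ≠ 0) :
    deltaF F (p ^ m + 2) (4 : F)⁻¹
      = 1 + (Finset.univ.filter (fun u : F => u ^ (p ^ m - 1) = -(2 : F)⁻¹)).card := by
  have hq2 : 2 ≤ p ^ m := by
    calc 2 ≤ p := hp.two_le
    _ = p ^ 1 := (pow_one p).symm
    _ ≤ p ^ m := Nat.pow_le_pow_right hp.pos hm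
  unfold deltaF
  have hcongr : Finset.univ.filter
        (fun x : F => (x + 1) ^ (p ^ m + 2) - x ^ (p ^ m + 2) = (4 : F)⁻¹)
      = Finset.univ.filter
        (fun x : F => 2 * x + 1 = 0 ∨ (2 * x + 1) ^ (p ^ m - 1) = -(2 : F)⁻¹) :=
    Finset.filter_congr (fun x _ => by
      constructor
      · exact fun h => (stmt19_sol hp F h2 h4 x).1 h
      · exact fun h => (stmt19_sol hp F h2 h4 x).2 h)
  rw [hcongr]
  have hbij : (Finset.univ.filter
        (fun x : F => 2 * x + 1 = 0 ∨ (2 * x + 1) ^ (p ^ m - 1) = -(2 : F)⁻¹)).card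
      = (Finset.univ.filter (fun u : F => u = 0 ∨ u ^ (p ^ m - 1) = -(2 : F)⁻¹)).card := by
    apply Finset.card_nbij' (i := fun x => 2 * x + 1) (j := fun u => (u - 1) / 2)
    · intro x hx
      simp only [Finset.mem_coe, Finset.mem_filter, Finset.mem_univ, true_and] at hx ⊢
      exact hx
    · intro u hu
      simp only [Finset.mem_coe, Finset.mem_filter, Finset.mem_univ, true_and] at hu ⊢
      have he : 2 * ((u - 1) / 2) + 1 = u := by field_simp; ring
      rw [he]
      exact hu
    · intro x _
      field_simp; ring
    · intro u _
      field_simp; ring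
  rw [hbij, Finset.filter_or]
  have h1 : Finset.univ.filter (fun u : F => u = 0) = {0} := by
    ext u; simp
  rw [h1, Finset.card_union_of_disjoint, Finset.card_singleton]
  rw [Finset.disjoint_left]
  intro u hu
  rw [Finset.mem_singleton] at hu
  subst hu
  simp only [Finset.mem_filter, Finset.mem_univ, true_and]
  rw [zero_pow (by omega)]
  intro h
  exact h2 (inv_eq_zero.1 (neg_eq_zero.1 h.symm))

lemma stmt19_exists {p m n : ℕ} (hp : p.Prime) (hpodd : Odd p) (hm : 1 ≤ m)
    (hn : n = 2 * m - 1)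
    (F : Type*) [Field F] [Fintype F] [DecidableEq F] [CharP F p]
    (hF : Fintype.card F = p ^ n) :
    (∃ u : F, u ^ (p ^ m - 1) = -(2 : F)⁻¹) ↔
      ((∃ y : F, y ^ (p - 1) = (4 : F)⁻¹) ∧ p ∣ (1 + 2 ^ n)) := by
  haveI : Fact p.Prime := ⟨hp⟩
  have hp2 := hp.two_le
  have hp3 : 3 ≤ p := by
    rcases hpodd with ⟨k, hk⟩
    omega
  have h2F : (2 : F) ≠ 0 := by
    intro h
    have hdd : (p : ℕ) ∣ 2 := (CharP.cast_eq_zero_iff F p 2).1 (by exact_mod_cast h)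
    have := Nat.le_of_dvd (by norm_num) hdd
    omega
  have hn1 : 1 ≤ n := by omega
  have hq2 : 2 ≤ p ^ m := by
    calc 2 ≤ p := hp.two_le
    _ = p ^ 1 := (pow_one p).symm
    _ ≤ p ^ m := Nat.pow_le_pow_right hp.pos hm
  have hpn : p ≤ p ^ n := Nat.le_self_pow (by omega) p
  set N := ∑ i ∈ Finset.range n, p ^ i with hNdef
  have hNmul : (p - 1) * N = p ^ n - 1 := stmt19_geom p (by omega) n
  have hNpos : 0 < N := by
    rcases Nat.eq_zero_or_pos N with h | h
    · rw [h] at hNmul; omega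
    · exact h
  have hNodd : Odd N := by
    have hmod : p ≡ 1 [MOD 2] := by
      refine ((Nat.modEq_iff_dvd' (by omega)).2 ?_).symm
      rcases hpodd with ⟨k, hk⟩
      exact ⟨k, by omega⟩
    have := stmt19_modeq p 2 n hmod
    unfold Nat.ModEq at this
    rw [Nat.odd_iff, this]
    omega
  have hNn : N ≡ n [MOD p - 1] :=
    stmt19_modeq p (p - 1) n (((Nat.modEq_iff_dvd' (by omega)).2 (dvd_refl _)).symm)
  have h2p1 : (2 : F) ^ (p - 1) = 1 := by
    have h2p : (2 : F) ^ p = 2 := by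
      have h := add_pow_char_pow (R := F) (1 : F) 1 p 1
      norm_num at h
      exact h
    apply mul_right_cancel₀ h2F
    rw [one_mul, ← pow_succ]
    calc (2:F) ^ (p - 1 + 1) = (2:F) ^ p := by congr 1; omega
    _ = 2 := h2p
  have h2N : (2 : F) ^ N = (2 : F) ^ n := stmt19_pow_modeq h2p1 hNn
  have hc0 : -(2 : F)⁻¹ ≠ 0 := neg_ne_zero.2 (inv_ne_zero h2F)
  have hdvdq : p - 1 ∣ p ^ m - 1 := by simpa using Nat.sub_dvd_pow_sub_pow p 1 m
  obtain ⟨k, hk⟩ := hdvdq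
  constructor
  · rintro ⟨u, hu⟩
    have hu0 : u ≠ 0 := by
      rintro rfl
      rw [zero_pow (by omega)] at hu
      exact hc0 hu.symm
    have hM : u ^ (p ^ n - 1) = 1 := by
      have := FiniteField.pow_card_sub_one_eq_one u hu0
      rwa [hF] at this
    have hcN : (-(2 : F)⁻¹) ^ N = 1 := by
      rw [← hu, ← pow_mul, hk]
      have he : p - 1 + 1 = p := by omega
      have : (p - 1) * k * N = (p ^ n - 1) * k := by rw [← hNmul]; ring
      rw [this, pow_mul, hM, one_pow]
    have h2n : (2 : F) ^ n = -1 := by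
      rw [Odd.neg_pow hNodd, inv_pow, h2N] at hcN
      have : ((2:F) ^ n)⁻¹ = -1 := by
        field_simp at hcN ⊢
        linear_combination -hcN
      rw [← inv_inv ((2:F) ^ n), this]
      norm_num
    constructor
    · refine ⟨u ^ (2 * k), ?_⟩
      rw [← pow_mul]
      have he : 2 * k * (p - 1) = (p ^ m - 1) * 2 := by rw [hk]; ring
      rw [he, pow_mul, hu]
      rw [neg_pow, inv_pow]
      norm_num
    · have hcast : ((1 + 2 ^ n : ℕ) : F) = 0 := by
        push_cast
        rw [h2n]
        ring
      exact (CharP.cast_eq_zero_iff F p _).1 hcast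
  · rintro ⟨-, hdvd⟩
    have h2n : (2 : F) ^ n = -1 := by
      have hcast : ((1 + 2 ^ n : ℕ) : F) = 0 := (CharP.cast_eq_zero_iff F p _).2 hdvd
      push_cast at hcast
      linear_combination hcast
    have hcN : (-(2 : F)⁻¹) ^ N = 1 := by
      rw [Odd.neg_pow hNodd, inv_pow, h2N, h2n]
      norm_num
    obtain ⟨g, hg⟩ := IsCyclic.exists_generator (α := Fˣ)
    set cu : Fˣ := Units.mk0 (-(2 : F)⁻¹) hc0 with hcu
    obtain ⟨t, ht⟩ := Subgroup.mem_zpowers_iff.1 (hg cu)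
    have horder : orderOf g = p ^ n - 1 := by
      rw [orderOf_eq_card_of_forall_mem_zpowers hg, Nat.card_eq_fintype_card,
        Fintype.card_units, hF]
    have hcuN : cu ^ N = 1 := by
      ext
      rw [Units.val_pow_eq_pow_val, Units.val_one]
      exact hcN
    have hdvd1 : ((p ^ n - 1 : ℕ) : ℤ) ∣ t * (N : ℤ) := by
      rw [← horder]
      rw [orderOf_dvd_iff_zpow_eq_one]
      rw [zpow_mul, ht, zpow_natCast, hcuN]
    have hcastN : ((p ^ n - 1 : ℕ) : ℤ) = ((p - 1 : ℕ) : ℤ) * (N : ℤ) := by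
      exact_mod_cast congrArg (Nat.cast (R := ℤ)) hNmul.symm
    have ht1 : ((p - 1 : ℕ) : ℤ) ∣ t := by
      have := hdvd1
      rw [hcastN] at this
      exact (mul_dvd_mul_iff_right (by exact_mod_cast hNpos.ne' : (N : ℤ) ≠ 0)).1 this
    obtain ⟨t', ht'⟩ := ht1
    have hB := Nat.gcd_eq_gcd_ab (p ^ m - 1) (p ^ n - 1)
    rw [hn, stmt19_gcd p hp.two_le m hm] at hB
    set a := (p ^ m - 1).gcdA (p ^ n - 1) with ha
    set b := (p ^ m - 1).gcdB (p ^ n - 1) with hb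
    rw [← hn] at hB
    have hgM : g ^ ((p ^ n - 1 : ℕ) : ℤ) = 1 := by
      rw [zpow_natCast, ← horder]
      exact pow_orderOf_eq_one g
    refine ⟨((g ^ (t' * a) : Fˣ) : F), ?_⟩
    have hkey : (g ^ (t' * a)) ^ (p ^ m - 1) = cu := by
      rw [← zpow_natCast (g ^ (t' * a)) (p ^ m - 1), ← zpow_mul]
      have hexp : t' * a * ((p ^ m - 1 : ℕ) : ℤ)
          = ((p - 1 : ℕ) : ℤ) * t' + ((p ^ n - 1 : ℕ) : ℤ) * (-(t' * b)) := by
        linear_combination (-t') * hB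
      rw [hexp, zpow_add, ← ht', ht, zpow_mul, hgM, one_zpow, mul_one]
    calc ((g ^ (t' * a) : Fˣ) : F) ^ (p ^ m - 1)
        = (((g ^ (t' * a)) ^ (p ^ m - 1) : Fˣ) : F) := by
          rw [Units.val_pow_eq_pow_val]
    _ = ((cu : Fˣ) : F) := by rw [hkey]
    _ = -(2 : F)⁻¹ := rfl

lemma stmt19_even {p m : ℕ} (hp : p.Prime) (hpodd : Odd p) (hm : 1 ≤ m)
    (F : Type*) [Field F] [Fintype F] [DecidableEq F] [CharP F p]
    (h2 : (2 : F) ≠ 0) (h4 : (4 : F) ≠ 0) (b : F) (hb : b ≠ (4 : F)⁻¹) :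
    Even (deltaF F (p ^ m + 2) b) := by
  have hdodd : Odd (p ^ m + 2) := (hpodd.pow).add_even (by norm_num)
  unfold deltaF
  apply stmt19_even_card_of_invol (fun x : F => -1 - x)
  · intro x hx
    simp only [Finset.mem_filter, Finset.mem_univ, true_and] at hx ⊢
    have e1 : (-1 - x : F) + 1 = -x := by ring
    have e2 : (-1 - x : F) = -(x + 1) := by ring
    rw [e1]
    conv_lhs => rw [e2]
    rw [Odd.neg_pow hdodd, Odd.neg_pow hdodd]
    linear_combination hx
  · intro x _
    show -1 - (-1 - x) = x
    ring
  · intro x hx heq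
    simp only [Finset.mem_filter, Finset.mem_univ, true_and] at hx
    have heq' : (-1 : F) - x = x := heq
    apply hb
    have hx2 : 2 * x + 1 = 0 := by linear_combination -heq'
    have hk := stmt19_keyid hp F x (m := m)
    rw [hx, hx2] at hk
    have h41 : (4 : F) * b = 1 := by linear_combination hk
    field_simp
    linear_combination h41

/-- Let `p` be an odd prime and `n = 2m - 1`. For `x^(p^m+2)` over `F_{p^n}`: if `1/4` is a
`(p-1)`-th power in `F_{p^n}` and `1 + 2^n ≡ 0 (mod p)`, then `ω_p = 1` and `ω₁ = 0`;
otherwise `ω_p = 0` and `ω₁ = 1`. -/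
theorem stmt19 (p : ℕ) (hp : p.Prime) (hpodd : Odd p) (m : ℕ) (hm : 0 < m) (n : ℕ)
    (hn : n = 2 * m - 1)
    (F : Type*) [Field F] [Fintype F] [DecidableEq F]
    (hF : Fintype.card F = p ^ n) :
    (((∃ y : F, y ^ (p - 1) = (4 : F)⁻¹) ∧ p ∣ (1 + 2 ^ n)) →
      omegaF F (p ^ m + 2) p = 1 ∧ omegaF F (p ^ m + 2) 1 = 0) ∧
    (¬ ((∃ y : F, y ^ (p - 1) = (4 : F)⁻¹) ∧ p ∣ (1 + 2 ^ n)) →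
      omegaF F (p ^ m + 2) p = 0 ∧ omegaF F (p ^ m + 2) 1 = 1) := by
  have hm1 : 1 ≤ m := hm
  haveI hchar : CharP F p := stmt19_charP hp (by omega) F hF
  haveI : Fact p.Prime := ⟨hp⟩
  have hp3 : 3 ≤ p := by
    rcases hpodd with ⟨k, hk⟩
    have := hp.two_le
    omega
  have h2 : (2 : F) ≠ 0 := by
    intro h
    have hdd : (p : ℕ) ∣ 2 := (CharP.cast_eq_zero_iff F p 2).1 (by exact_mod_cast h)
    have := Nat.le_of_dvd (by norm_num) hdd
    omega
  have h4 : (4 : F) ≠ 0 := by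
    intro h
    have hdd : (p : ℕ) ∣ 4 := (CharP.cast_eq_zero_iff F p 4).1 (by exact_mod_cast h)
    have hdd2 : (p : ℕ) ∣ 2 ^ 2 := by norm_num; exact hdd
    have := Nat.le_of_dvd (by norm_num) (hp.dvd_of_dvd_pow hdd2)
    omega
  have hc0 : -(2 : F)⁻¹ ≠ 0 := neg_ne_zero.2 (inv_ne_zero h2)
  have hdelta4 := stmt19_delta hp hm1 F h2 h4
  have hS := stmt19_Scard hp hm1 hn F hF (-(2 : F)⁻¹) hc0
  have hiff := stmt19_exists hp hpodd hm1 hn F hF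
  have heven := stmt19_even hp hpodd hm1 F h2 h4
  constructor
  · intro hC
    have hEx : ∃ u : F, u ^ (p ^ m - 1) = -(2 : F)⁻¹ := hiff.2 hC
    have hδ : deltaF F (p ^ m + 2) (4 : F)⁻¹ = p := by
      rw [hdelta4, hS, if_pos hEx]
      omega
    constructor
    · unfold omegaF
      have hset : Finset.univ.filter (fun b : F => deltaF F (p ^ m + 2) b = p) = {(4 : F)⁻¹} := by
        ext b
        simp only [Finset.mem_filter, Finset.mem_univ, true_and, Finset.mem_singleton]
        constructor
        · intro hbp
          by_contra hbne
          obtain ⟨c, hc⟩ := heven b hbne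
          rcases hpodd with ⟨k, hk⟩
          omega
        · rintro rfl
          exact hδ
      rw [hset, Finset.card_singleton]
    · unfold omegaF
      rw [Finset.card_eq_zero, Finset.filter_eq_empty_iff]
      intro b _
      rcases eq_or_ne b (4 : F)⁻¹ with rfl | hbne
      · rw [hδ]; omega
      · intro h1
        obtain ⟨c, hc⟩ := heven b hbne
        omega
  · intro hC
    have hEx : ¬ ∃ u : F, u ^ (p ^ m - 1) = -(2 : F)⁻¹ := fun h => hC (hiff.1 h)
    have hδ : deltaF F (p ^ m + 2) (4 : F)⁻¹ = 1 := by
      rw [hdelta4, hS, if_neg hEx]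
    constructor
    · unfold omegaF
      rw [Finset.card_eq_zero, Finset.filter_eq_empty_iff]
      intro b _
      rcases eq_or_ne b (4 : F)⁻¹ with rfl | hbne
      · rw [hδ]; omega
      · intro h1
        obtain ⟨c, hc⟩ := heven b hbne
        rcases hpodd with ⟨k, hk⟩
        omega
    · unfold omegaF
      have hset : Finset.univ.filter (fun b : F => deltaF F (p ^ m + 2) b = 1) = {(4 : F)⁻¹} := by
        ext b
        simp only [Finset.mem_filter, Finset.mem_univ, true_and, Finset.mem_singleton]
        constructor
        · intro hbp
          by_contra hbne
          obtain ⟨c, hc⟩ := heven b hbne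
          omega
        · rintro rfl
          exact hδ
      rw [hset, Finset.card_singleton]
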